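/- Let T be a nonempty heavy family of 3-element subsets of [n] and let H = ↓T. Then the number of 2-element sets in H is at least twice the number of 1-element sets in H; that is, |H ∩ L_2| ≥ 2·|H ∩ L_1|. -/

import Mathlib

open scoped Classical

/-- The width of a finite family of finite sets: the maximum size of an
antichain (under inclusion) contained in the family. -/
noncomputable def width (F : Finset (Finset ℕ)) : ℕ :=
  (F.powerset.filter (fun A => ∀ x ∈ A, ∀ y ∈ A, x ≠ y → ¬ x ⊆ y)).sup Finset.card

/-- The downset generated by a family of finite sets. -/
def downGen (T : Finset (Finset ℕ)) : Finset (Finset ℕ) :=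
  T.biUnion Finset.powerset

/-!
Induct on `#T`; call the 2-sets of `↓T` edges. If every vertex lies on at least four edges,
double counting vertex–edge incidences gives the bound. Otherwise pick a vertex `v` of degree
at most three, with neighbourhood `N`. The triples avoiding `v` together with the edges at `v`
form an antichain, so `deg v ≤ #{t ∈ T | v ∈ t} ≤ (deg v).choose 2`; hence `deg v = 3` and
the triples through `v` are exactly `v ∪ p` for the three pairs `p ⊆ N`. Replacing these three
triples by `N` costs `↓T` one singleton and three edges, and keeps the family heavy: an
antichain of the new downset lifts to an antichain of `↓T` with three more members, by adding
the edges at `v` and pushing its singletons inside `N` up to the pairs of `N` above them.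
-/

open Finset

variable {T : Finset (Finset ℕ)} {v w : ℕ}

lemma mem_downGen {x : Finset ℕ} : x ∈ downGen T ↔ ∃ t ∈ T, x ⊆ t := by
  simp [downGen]

lemma mem_downGen_of_subset {x y : Finset ℕ} (hy : y ∈ downGen T) (hxy : x ⊆ y) :
    x ∈ downGen T :=
  let ⟨t, ht, hyt⟩ := mem_downGen.1 hy
  mem_downGen.2 ⟨t, ht, hxy.trans hyt⟩

lemma card_le_width {F A : Finset (Finset ℕ)} (hAF : A ⊆ F)
    (hA : IsAntichain (· ⊆ ·) (A : Set (Finset ℕ))) : #A ≤ width F :=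
  le_sup (f := card) (mem_filter.2 ⟨mem_powerset.2 hAF, hA⟩)

lemma width_le {F : Finset (Finset ℕ)} {k : ℕ}
    (h : ∀ A ⊆ F, IsAntichain (· ⊆ ·) (A : Set (Finset ℕ)) → #A ≤ k) :
    width F ≤ k :=
  Finset.sup_le fun A hA => h A (mem_powerset.1 (mem_filter.1 hA).1) (mem_filter.1 hA).2

lemma card_level_mul_le (F : Finset (Finset ℕ)) {r s k : ℕ}
    (h : ∀ x ∈ {A ∈ F | #A = r}, k ≤ #{e ∈ {A ∈ F | #A = s} | x ⊆ e}) :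
    #{A ∈ F | #A = r} * k ≤ #{A ∈ F | #A = s} * s.choose r := by
  refine card_mul_le_card_mul (fun x e : Finset ℕ => x ⊆ e) h fun e he => ?_
  rw [← (mem_filter.1 he).2, ← card_powersetCard]
  exact card_le_card fun x hx =>
    mem_powersetCard.2 ⟨(mem_filter.1 hx).2, (mem_filter.1 (mem_filter.1 hx).1).2⟩

lemma card_image_pair {N : Finset ℕ} (hvN : v ∉ N) :
    #(N.image fun w => ({v, w} : Finset ℕ)) = #N := by
  refine card_image_of_injOn fun a ha b _ hab => ?_
  have : a ∈ ({v, b} : Finset ℕ) := by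
    rw [← show ({v, a} : Finset ℕ) = {v, b} from hab]
    simp
  simpa [show a ≠ v from fun h => hvN (h ▸ ha)] using this

def nbhd (T : Finset (Finset ℕ)) (v : ℕ) : Finset ℕ :=
  {t ∈ T | v ∈ t}.biUnion (·.erase v)

lemma mem_nbhd : w ∈ nbhd T v ↔ w ≠ v ∧ ∃ t ∈ T, v ∈ t ∧ w ∈ t := by
  simp only [nbhd, mem_biUnion, mem_filter, mem_erase]
  aesop

lemma self_notMem_nbhd : v ∉ nbhd T v := fun h => (mem_nbhd.1 h).1 rfl

lemma erase_subset_nbhd {t : Finset ℕ} (ht : t ∈ T) (hv : v ∈ t) : t.erase v ⊆ nbhd T v :=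
  subset_biUnion_of_mem (·.erase v) (mem_filter.2 ⟨ht, hv⟩)

lemma filter_downGen_card_two_mem :
    {e ∈ downGen T | #e = 2 ∧ v ∈ e} = (nbhd T v).image fun w => {v, w} := by
  ext e
  simp only [mem_filter, mem_image, mem_downGen, mem_nbhd]
  constructor
  · rintro ⟨⟨t, ht, het⟩, he, hve⟩
    obtain ⟨a, b, hab, rfl⟩ := card_eq_two.1 he
    have hat : a ∈ t := het (mem_insert_self _ _)
    have hbt : b ∈ t := het (mem_insert_of_mem (mem_singleton_self _))
    rcases mem_insert.1 hve with rfl | hvb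
    · exact ⟨b, ⟨Ne.symm hab, t, ht, hat, hbt⟩, rfl⟩
    · obtain rfl := mem_singleton.1 hvb
      exact ⟨a, ⟨hab, t, ht, hbt, hat⟩, pair_comm _ _⟩
  · rintro ⟨w, ⟨hwv, t, ht, hvt, hwt⟩, rfl⟩
    exact ⟨⟨t, ht, insert_subset hvt (singleton_subset_iff.2 hwt)⟩, card_pair hwv.symm,
      mem_insert_self _ _⟩

lemma card_filter_downGen_card_two_mem :
    #{e ∈ downGen T | #e = 2 ∧ v ∈ e} = #(nbhd T v) := by
  rw [filter_downGen_card_two_mem, card_image_pair self_notMem_nbhd]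

lemma filter_downGen_card_one_mem (hv : {v} ∈ downGen T) :
    {A ∈ downGen T | #A = 1 ∧ v ∈ A} = {{v}} := by
  ext A
  simp only [mem_filter, mem_singleton]
  constructor
  · rintro ⟨-, hA, hvA⟩
    obtain ⟨a, rfl⟩ := card_eq_one.1 hA
    rw [mem_singleton.1 hvA]
  · rintro rfl
    exact ⟨hv, card_singleton v, mem_singleton_self v⟩

lemma card_nbhd_le_card_filter_mem {r : ℕ} (hr : 2 ≤ r) (hT : ∀ t ∈ T, #t = r)
    (heavy : width (downGen T) ≤ #T) : #(nbhd T v) ≤ #{t ∈ T | v ∈ t} := by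
  set E := {e ∈ downGen T | #e = 2 ∧ v ∈ e}
  have hsub : {t ∈ T | v ∉ t} ∪ E ⊆ downGen T :=
    union_subset (fun t ht => mem_downGen.2 ⟨t, (mem_filter.1 ht).1, subset_rfl⟩)
      (filter_subset _ _)
  have hanti :
      IsAntichain (· ⊆ ·) (({t ∈ T | v ∉ t} ∪ E : Finset _) : Set (Finset ℕ)) := by
    rw [coe_union, isAntichain_union]
    refine ⟨Set.Sized.isAntichain fun t ht => hT t (mem_filter.1 ht).1,
      Set.Sized.isAntichain fun e he => (mem_filter.1 he).2.1, ?_⟩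
    intro t ht e he hte
    obtain ⟨htT, hvt⟩ := mem_filter.1 ht
    obtain ⟨-, he2, hve⟩ := mem_filter.1 he
    refine ⟨fun h => hte (eq_of_subset_of_card_le h ?_), fun h => hvt (h hve)⟩
    rw [he2, hT t htT]
    exact hr
  have hdisj : Disjoint {t ∈ T | v ∉ t} E :=
    disjoint_filter_filter' _ _ fun p h₁ h₂ x hx => (h₁ x hx) ((h₂ x hx).2)
  have hwidth := (card_le_width hsub hanti).trans heavy
  rw [card_union_of_disjoint hdisj, card_filter_downGen_card_two_mem] at hwidth
  have := card_filter_add_card_filter_not (s := T) (p := (v ∈ ·))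
  omega

lemma image_erase_subset_powersetCard {r : ℕ} (hT : ∀ t ∈ T, #t = r) :
    {t ∈ T | v ∈ t}.image (·.erase v) ⊆ (nbhd T v).powersetCard (r - 1) := by
  intro s hs
  obtain ⟨t, ht, rfl⟩ := mem_image.1 hs
  obtain ⟨htT, hvt⟩ := mem_filter.1 ht
  rw [mem_powersetCard, card_erase_of_mem hvt, hT t htT]
  exact ⟨erase_subset_nbhd htT hvt, rfl⟩

lemma card_image_erase : #({t ∈ T | v ∈ t}.image (·.erase v)) = #{t ∈ T | v ∈ t} :=
  card_image_of_injOn fun _ h₁ _ h₂ =>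
    erase_injOn' v (mem_filter.1 h₁).2 (mem_filter.1 h₂).2

lemma card_nbhd_eq_three_of_le (hT : ∀ t ∈ T, #t = 3) (heavy : width (downGen T) ≤ #T)
    (hv : ∃ t ∈ T, v ∈ t) (hdeg : #(nbhd T v) ≤ 3) :
    #(nbhd T v) = 3 ∧ #{t ∈ T | v ∈ t} = 3 ∧
      ∀ p ⊆ nbhd T v, #p = 2 → insert v p ∈ T := by
  obtain ⟨t, ht, hvt⟩ := hv
  have hN2 : 2 ≤ #(nbhd T v) := by
    simpa [card_erase_of_mem hvt, hT t ht] using card_le_card (erase_subset_nbhd ht hvt)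
  have hsub := image_erase_subset_powersetCard (v := v) hT
  have hchoose := card_le_card hsub
  rw [card_image_erase, card_powersetCard] at hchoose
  have hstar := card_nbhd_le_card_filter_mem (v := v) (by norm_num) hT heavy
  have hN : #(nbhd T v) = 3 := by
    by_contra hN
    rw [show #(nbhd T v) = 2 by omega] at hchoose hstar
    exact absurd (hstar.trans hchoose) (by decide)
  rw [hN] at hchoose hstar
  have hTv : #{t ∈ T | v ∈ t} = 3 := le_antisymm hchoose hstar
  refine ⟨hN, hTv, fun p hp hp2 => ?_⟩
  have hfull := eq_of_subset_of_card_le hsub (by simp [card_image_erase, hN, hTv])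
  obtain ⟨t, ht, rfl⟩ := mem_image.1 (hfull ▸ mem_powersetCard.2 ⟨hp, hp2⟩)
  rw [insert_erase (mem_filter.1 ht).2]
  exact (mem_filter.1 ht).1

lemma insert_mem_downGen {N x : Finset ℕ} (hfull : ∀ p ⊆ N, #p = 2 → insert v p ∈ T)
    (hN : 2 ≤ #N) (hxN : x ⊆ N) (hx : #x ≤ 2) : insert v x ∈ downGen T := by
  obtain ⟨p, hxp, hpN, hp⟩ := exists_subsuperset_card_eq hxN hx hN
  exact mem_downGen.2 ⟨insert v p, hfull p hpN hp, insert_subset_insert v hxp⟩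

lemma ssubset_mem_downGen {N : Finset ℕ} (hfull : ∀ p ⊆ N, #p = 2 → insert v p ∈ T)
    (hN : #N = 3) : ∀ x ⊂ N, x ∈ downGen T := fun x hx =>
  mem_downGen_of_subset (insert_mem_downGen hfull (by omega) hx.subset
    (by have := card_lt_card hx; omega)) (subset_insert v x)

lemma card_le_card_filter_exists_subset {N : Finset ℕ} (hN : #N = 3) {S : Finset (Finset ℕ)}
    (hS : S ⊆ N.powersetCard 1) : #S ≤ #{p ∈ N.powersetCard 2 | ∃ s ∈ S, s ⊆ p} := by
  -- each singleton of `N` lies in two pairs of `N`, and each pair contains two singletons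
  suffices #S * 2 ≤ #{p ∈ N.powersetCard 2 | ∃ s ∈ S, s ⊆ p} * 2 by omega
  refine card_mul_le_card_mul (fun s p : Finset ℕ => s ⊆ p) (fun s hs => ?_) fun p hp => ?_
  · obtain ⟨hsN, hs1⟩ := mem_powersetCard.1 (hS hs)
    obtain ⟨w, rfl⟩ := card_eq_one.1 hs1
    have hwN : w ∈ N := singleton_subset_iff.1 hsN
    calc 2 = #((N.erase w).image N.erase) := by
          rw [card_image_of_injOn ((erase_injOn N).mono (erase_subset w N)),
            card_erase_of_mem hwN, hN]
      _ ≤ _ := card_le_card fun p hp => by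
          obtain ⟨u, hu, rfl⟩ := mem_image.1 hp
          have hwu : {w} ⊆ N.erase u :=
            singleton_subset_iff.2 (mem_erase.2 ⟨(ne_of_mem_erase hu).symm, hwN⟩)
          have hu2 : #(N.erase u) = 2 := by rw [card_erase_of_mem (mem_of_mem_erase hu), hN]
          exact mem_filter.2 ⟨mem_filter.2
            ⟨mem_powersetCard.2 ⟨erase_subset u N, hu2⟩, {w}, hs, hwu⟩, hwu⟩
  · obtain ⟨hpN, hp2⟩ := mem_powersetCard.1 (mem_filter.1 hp).1
    calc #{s ∈ S | s ⊆ p} ≤ #(p.powersetCard 1) := card_le_card fun s hs =>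
          mem_powersetCard.2
            ⟨(mem_filter.1 hs).2, (mem_powersetCard.1 (hS (mem_filter.1 hs).1)).2⟩
      _ = 2 := by rw [card_powersetCard, hp2]; rfl

def liftPairs (v : ℕ) (N : Finset ℕ) (B : Finset (Finset ℕ)) : Finset (Finset ℕ) :=
  (N.image fun w => {v, w}) ∪ {p ∈ N.powersetCard 2 | ∃ s ∈ B ∩ N.powersetCard 1, s ⊆ p}

section liftPairs

variable {N : Finset ℕ} {B : Finset (Finset ℕ)}

lemma liftPairs_subset_downGen (hfull : ∀ p ⊆ N, #p = 2 → insert v p ∈ T) (hN : 2 ≤ #N) :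
    liftPairs v N B ⊆ downGen T := by
  refine union_subset (fun e he => ?_) fun p hp => ?_
  · obtain ⟨w, hw, rfl⟩ := mem_image.1 he
    exact insert_mem_downGen hfull hN (singleton_subset_iff.2 hw) (by simp)
  · obtain ⟨hpN, hp2⟩ := mem_powersetCard.1 (mem_filter.1 hp).1
    exact mem_downGen_of_subset (insert_mem_downGen hfull hN hpN hp2.le) (subset_insert v p)

lemma isAntichain_liftPairs (hvN : v ∉ N) :
    IsAntichain (· ⊆ ·) (liftPairs v N B : Set (Finset ℕ)) := by
  refine Set.Sized.isAntichain (r := 2) fun x hx => ?_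
  rcases mem_union.1 hx with hx | hx
  · obtain ⟨w, hw, rfl⟩ := mem_image.1 hx
    exact card_pair fun h => hvN (h ▸ hw)
  · exact (mem_powersetCard.1 (mem_filter.1 hx).1).2

lemma card_add_three_le_card_liftPairs (hvN : v ∉ N) (hN : #N = 3) :
    #(B ∩ N.powersetCard 1) + 3 ≤ #(liftPairs v N B) := by
  have hdisj : Disjoint (N.image fun w => ({v, w} : Finset ℕ))
      {p ∈ N.powersetCard 2 | ∃ s ∈ B ∩ N.powersetCard 1, s ⊆ p} :=
    disjoint_left.2 fun e he hp => by
      obtain ⟨w, hw, rfl⟩ := mem_image.1 he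
      exact hvN ((mem_powersetCard.1 (mem_filter.1 hp).1).1 (mem_insert_self v _))
  rw [liftPairs, card_union_of_disjoint hdisj, card_image_pair hvN, hN, add_comm]
  exact Nat.add_le_add_left (card_le_card_filter_exists_subset hN inter_subset_right) 3

lemma not_subset_and_not_subset_of_mem_liftPairs
    (hB : IsAntichain (· ⊆ ·) (B : Set (Finset ℕ))) (hvB : ∀ x ∈ B, v ∉ x)
    (hB₀ : ∅ ∉ B) {a c : Finset ℕ} (ha : a ∈ B \ N.powersetCard 1)
    (hc : c ∈ liftPairs v N B) :
    ¬ a ⊆ c ∧ ¬ c ⊆ a := by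
  obtain ⟨haB, haS⟩ := mem_sdiff.1 ha
  have hS : a ⊆ N → #a ≤ 1 → a ∈ N.powersetCard 1 := fun haN ha1 =>
    mem_powersetCard.2 ⟨haN, by
      have := card_pos.2 (nonempty_iff_ne_empty.2 fun h => hB₀ (h ▸ haB)); omega⟩
  rcases mem_union.1 hc with hc | hc
  · obtain ⟨w, hw, rfl⟩ := mem_image.1 hc
    refine ⟨fun h => ?_, fun h => hvB a haB (h (mem_insert_self v _))⟩
    have haw : a ⊆ {w} := (subset_insert_iff_of_notMem (hvB a haB)).1 h
    exact haS (hS (haw.trans (singleton_subset_iff.2 hw)) (card_le_card haw))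
  · obtain ⟨hcN2, s, hsS, hsc⟩ := mem_filter.1 hc
    obtain ⟨hsB, hsN⟩ := mem_inter.1 hsS
    have hsa : s ≠ a := fun h => haS (h ▸ hsN)
    refine ⟨fun h => ?_, fun h => hB hsB haB hsa (hsc.trans h)⟩
    obtain ⟨hcN, hc2⟩ := mem_powersetCard.1 hcN2
    have hac : a ⊂ c := h.ssubset_of_ne fun hac => hB hsB haB hsa (hac ▸ hsc)
    exact haS (hS (h.trans hcN) (by have := card_lt_card hac; omega))

end liftPairs

lemma card_add_three_le_width {N : Finset ℕ} (hvN : v ∉ N) (hN : #N = 3)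
    (hfull : ∀ p ⊆ N, #p = 2 → insert v p ∈ T) {B : Finset (Finset ℕ)}
    (hBH : B ⊆ downGen T) (hB : IsAntichain (· ⊆ ·) (B : Set (Finset ℕ)))
    (hvB : ∀ x ∈ B, v ∉ x) (hB₀ : ∅ ∉ B) :
    #B + 3 ≤ width (downGen T) := by
  have hcross : ∀ a ∈ B \ N.powersetCard 1, ∀ c ∈ liftPairs v N B, ¬ a ⊆ c ∧ ¬ c ⊆ a :=
    fun _ ha _ hc => not_subset_and_not_subset_of_mem_liftPairs hB hvB hB₀ ha hc
  have hA : IsAntichain (· ⊆ ·)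
      ((B \ N.powersetCard 1 ∪ liftPairs v N B : Finset _) : Set (Finset ℕ)) := by
    rw [coe_union, isAntichain_union]
    exact ⟨hB.subset (coe_subset.2 sdiff_subset), isAntichain_liftPairs hvN,
      fun a ha c hc _ => hcross a ha c hc⟩
  have hdisj : Disjoint (B \ N.powersetCard 1) (liftPairs v N B) :=
    disjoint_left.2 fun a ha hc => (hcross a ha a hc).1 subset_rfl
  have hwidth := card_le_width (union_subset (sdiff_subset.trans hBH)
    (liftPairs_subset_downGen hfull (by omega))) hA
  rw [card_union_of_disjoint hdisj, card_sdiff, inter_comm] at hwidth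
  have := card_add_three_le_card_liftPairs (B := B) hvN hN
  have := card_le_card (inter_subset_left : B ∩ N.powersetCard 1 ⊆ B)
  omega

def collapse (T : Finset (Finset ℕ)) (v : ℕ) : Finset (Finset ℕ) :=
  insert (nbhd T v) {t ∈ T | v ∉ t}

lemma downGen_collapse (hfull : ∀ x ⊂ nbhd T v, x ∈ downGen T) :
    downGen (collapse T v) = insert (nbhd T v) {x ∈ downGen T | v ∉ x} := by
  ext x
  simp only [collapse, mem_insert, mem_filter, mem_downGen, exists_eq_or_imp]
  constructor
  · rintro (hx | ⟨t, ⟨ht, hvt⟩, hxt⟩)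
    · obtain rfl | hx := hx.eq_or_ssubset
      · exact Or.inl rfl
      · exact Or.inr ⟨mem_downGen.1 (hfull x hx), fun h => self_notMem_nbhd (hx.subset h)⟩
    · exact Or.inr ⟨⟨t, ht, hxt⟩, fun h => hvt (hxt h)⟩
  · rintro (rfl | ⟨⟨t, ht, hxt⟩, hvx⟩)
    · exact Or.inl subset_rfl
    · by_cases hvt : v ∈ t
      · exact Or.inl ((subset_erase.2 ⟨hxt, hvx⟩).trans (erase_subset_nbhd ht hvt))
      · exact Or.inr ⟨t, ⟨ht, hvt⟩, hxt⟩

lemma card_level_downGen_collapse (hfull : ∀ x ⊂ nbhd T v, x ∈ downGen T) {k : ℕ}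
    (hk : #(nbhd T v) ≠ k) :
    #{A ∈ downGen (collapse T v) | #A = k} + #{A ∈ downGen T | #A = k ∧ v ∈ A} =
      #{A ∈ downGen T | #A = k} := by
  rw [downGen_collapse hfull, filter_insert, if_neg hk, filter_filter,
    ← card_filter_add_card_filter_not (s := {A ∈ downGen T | #A = k}) (p := (v ∈ ·)),
    filter_filter, filter_filter, add_comm]
  simp only [and_comm]

lemma width_downGen_collapse_le (heavy : width (downGen T) ≤ #T) (hN : #(nbhd T v) = 3)
    (hTv : #{t ∈ T | v ∈ t} = 3) (hfull : ∀ p ⊆ nbhd T v, #p = 2 → insert v p ∈ T) :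
    width (downGen (collapse T v)) ≤ #(collapse T v) := by
  have hsplit := card_filter_add_card_filter_not (s := T) (p := (v ∈ ·))
  refine width_le fun B hB hanti => ?_
  rw [downGen_collapse (ssubset_mem_downGen hfull hN)] at hB
  by_cases hB₀ : ∅ ∈ B
  · have hB₁ : B ⊆ {∅} := fun x hx => mem_singleton.2 <| by_contra fun h =>
      hanti hB₀ hx (Ne.symm h) (empty_subset x)
    exact (card_le_card hB₁).trans (card_pos.2 ⟨_, mem_insert_self _ _⟩)
  have hlift : ∀ B' ⊆ B, B' ⊆ {x ∈ downGen T | v ∉ x} → #B' + 3 ≤ #T :=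
    fun B' hB' hB'H =>
      (card_add_three_le_width self_notMem_nbhd hN hfull (hB'H.trans (filter_subset _ _))
        (hanti.subset hB') (fun x hx => (mem_filter.1 (hB'H hx)).2)
        fun h => hB₀ (hB' h)).trans heavy
  by_cases hNT : nbhd T v ∈ T
  · have hcol : collapse T v = {t ∈ T | v ∉ t} :=
      insert_eq_of_mem (mem_filter.2 ⟨hNT, self_notMem_nbhd⟩)
    have hNH : nbhd T v ∈ {x ∈ downGen T | v ∉ x} :=
      mem_filter.2 ⟨mem_downGen.2 ⟨_, hNT, subset_rfl⟩, self_notMem_nbhd⟩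
    have := hlift B subset_rfl (insert_eq_of_mem hNH ▸ hB)
    rw [hcol]
    omega
  · have hcol : #(collapse T v) = #{t ∈ T | v ∉ t} + 1 :=
      card_insert_of_notMem fun h => hNT (mem_filter.1 h).1
    have := hlift (B.erase (nbhd T v)) (erase_subset _ _) fun x hx =>
      (mem_insert.1 (hB (mem_of_mem_erase hx))).resolve_left (ne_of_mem_erase hx)
    have := pred_card_le_card_erase (s := B) (a := nbhd T v)
    omega

lemma exists_smaller_of_degree_le_three (hT : ∀ t ∈ T, #t = 3)
    (heavy : width (downGen T) ≤ #T) (hv : {v} ∈ downGen T)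
    (hdeg : #{e ∈ downGen T | #e = 2 ∧ v ∈ e} ≤ 3) :
    ∃ T' : Finset (Finset ℕ), (∀ t ∈ T', #t = 3) ∧ width (downGen T') ≤ #T' ∧
      #T' < #T ∧
      #{A ∈ downGen T' | #A = 1} + 1 = #{A ∈ downGen T | #A = 1} ∧
      #{A ∈ downGen T' | #A = 2} + 3 = #{A ∈ downGen T | #A = 2} := by
  obtain ⟨t, ht, hvt⟩ := mem_downGen.1 hv
  rw [card_filter_downGen_card_two_mem] at hdeg
  obtain ⟨hN, hTv, hfull⟩ :=
    card_nbhd_eq_three_of_le hT heavy ⟨t, ht, singleton_subset_iff.1 hvt⟩ hdeg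
  have hssub := ssubset_mem_downGen hfull hN
  have h1 := card_level_downGen_collapse hssub (k := 1) (by omega)
  have h2 := card_level_downGen_collapse hssub (k := 2) (by omega)
  rw [filter_downGen_card_one_mem hv, card_singleton] at h1
  rw [card_filter_downGen_card_two_mem, hN] at h2
  refine ⟨collapse T v, ?_, width_downGen_collapse_le heavy hN hTv hfull, ?_, h1, h2⟩
  · intro s hs
    rcases mem_insert.1 hs with rfl | hs
    exacts [hN, hT s (mem_filter.1 hs).1]
  · have := card_filter_add_card_filter_not (s := T) (p := (v ∈ ·))
    have := card_insert_le (nbhd T v) {t ∈ T | v ∉ t}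
    rw [collapse]
    omega

theorem heavy_level_two_vs_one_general (T : Finset (Finset ℕ))
    (hTr : ∀ A ∈ T, A.card = 3)
    (heavy : width (downGen T) ≤ T.card) :
    2 * ((downGen T).filter (fun A => A.card = 1)).card ≤
      ((downGen T).filter (fun A => A.card = 2)).card := by
  induction hn : #T using Nat.strong_induction_on generalizing T with
  | _ n ih =>
    by_cases hdeg :
        ∀ x ∈ {A ∈ downGen T | #A = 1}, 4 ≤ #{e ∈ {A ∈ downGen T | #A = 2} | x ⊆ e}
    · have := card_level_mul_le (downGen T) hdeg
      rw [Nat.choose_one_right] at this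
      omega
    push Not at hdeg
    obtain ⟨x, hx, hlow⟩ := hdeg
    obtain ⟨hxH, hx1⟩ := mem_filter.1 hx
    obtain ⟨v, rfl⟩ := card_eq_one.1 hx1
    obtain ⟨T', hT', heavy', hlt, h1, h2⟩ := exists_smaller_of_degree_le_three hTr heavy hxH
      (by simpa only [filter_filter, singleton_subset_iff, Nat.lt_succ_iff] using hlow)
    have := ih _ (hn ▸ hlt) T' hT' heavy' rfl
    omega

/-- For a nonempty heavy family `T` of 3-element sets with generated downset `H`,
the number of 2-element sets in `H` is at least twice the number of singletons. -/
theorem heavy_level_two_vs_one (n : ℕ) (T : Finset (Finset ℕ))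
    (hT : ∀ A ∈ T, A ⊆ Finset.Icc 1 n)
    (hTr : ∀ A ∈ T, A.card = 3)
    (hne : T.Nonempty)
    (heavy : width (downGen T) ≤ T.card) :
    2 * ((downGen T).filter (fun A => A.card = 1)).card ≤
      ((downGen T).filter (fun A => A.card = 2)).card :=
  heavy_level_two_vs_one_general T hTr heavy
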